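/- Let Δ be simply-laced, α a simple root, and γ a positive root with γ ≽ α and with the coefficient of α in γ equal to 1. Then the inversion set of the minimal-length element w_{γ,α} taking γ to α equals {μ ∈ Δ⁺ | [μ:α] = 0 and γ − μ ∈ Δ⁺}, where [μ:α] denotes the coefficient of α in μ. -/

import Mathlib

open scoped RealInnerProductSpace

/-- Data of a crystallographic root system in a real inner product space `V`,
with simple roots indexed by a finite type `ι`. -/
structure RSD (ι V : Type*) [Fintype ι] [NormedAddCommGroup V]
    [InnerProductSpace ℝ V] where
  /-- The simple roots. -/
  sroot : ι → V
  /-- The set of roots. -/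
  Δ : Set V
  finite : Δ.Finite
  zero_not_mem : (0 : V) ∉ Δ
  sroot_mem : ∀ i, sroot i ∈ Δ
  sroot_indep : LinearIndependent ℝ sroot
  neg_mem : ∀ a ∈ Δ, -a ∈ Δ
  /-- Crystallographic condition. -/
  crys : ∀ a ∈ Δ, ∀ b ∈ Δ, ∃ n : ℤ, 2 * ⟪a, b⟫ / ⟪a, a⟫ = (n : ℝ)
  /-- The reflection associated with a vector (only specified on roots). -/
  reflect : V → (V ≃ₗ[ℝ] V)
  reflect_apply : ∀ a ∈ Δ, ∀ v : V,
    reflect a v = v - (2 * ⟪a, v⟫ / ⟪a, a⟫) • a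
  reflect_root_mem : ∀ a ∈ Δ, ∀ b ∈ Δ, reflect a b ∈ Δ
  /-- Every root is a nonnegative or nonpositive integral combination of simple roots. -/
  decomp : ∀ a ∈ Δ, (∃ c : ι → ℕ, a = ∑ i, (c i : ℝ) • sroot i) ∨
      (∃ c : ι → ℕ, a = -∑ i, (c i : ℝ) • sroot i)
  /-- Irreducibility. -/
  irred : ∀ S T : Set V, S ∪ T = Δ → (∀ a ∈ S, ∀ b ∈ T, ⟪a, b⟫ = 0) →
      S = ∅ ∨ T = ∅

namespace RSD

variable {ι V : Type*} [Fintype ι] [NormedAddCommGroup V] [InnerProductSpace ℝ V]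
  (R : RSD ι V)

/-- The set of positive roots. -/
def pos : Set V := {a ∈ R.Δ | ∃ c : ι → ℕ, a = ∑ i, (c i : ℝ) • R.sroot i}

/-- `R.le μ γ` means `μ ≼ γ`, i.e. `γ - μ` is a nonnegative integral combination
of simple roots. -/
def le (μ γ : V) : Prop := ∃ c : ι → ℕ, γ - μ = ∑ i, (c i : ℝ) • R.sroot i

/-- The Weyl group, generated by the simple reflections. -/
def W : Subgroup (V ≃ₗ[ℝ] V) :=
  Subgroup.closure (Set.range fun i => R.reflect (R.sroot i))

/-- The inversion set `N(w) = {γ ∈ Δ⁺ ∣ w γ ∈ -Δ⁺}`. -/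
def N (w : V ≃ₗ[ℝ] V) : Set V := {γ ∈ R.pos | -(w γ) ∈ R.pos}

/-- The length of `w`: minimal length of an expression of `w` as a product of
simple reflections. -/
noncomputable def len (w : V ≃ₗ[ℝ] V) : ℕ :=
  sInf {n | ∃ l : List ι, l.length = n ∧
    (l.map fun i => R.reflect (R.sroot i)).prod = w}

/-- The coroot `a∨ = 2a/(a,a)`. -/
@[nolint unusedArguments]
noncomputable def coroot (_R : RSD ι V) (a : V) : V := (2 / ⟪a, a⟫) • a

/-- `ρ`, the half-sum of the positive roots. -/
noncomputable def rho : V :=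
  (2⁻¹ : ℝ) • ∑ a ∈ (R.finite.subset (fun a ha => ha.1 : R.pos ⊆ R.Δ)).toFinset, a

/-- `R.HtIs γ n` : the height of `γ` is `n`. -/
def HtIs (γ : V) (n : ℕ) : Prop :=
  ∃ c : ι → ℕ, γ = ∑ i, (c i : ℝ) • R.sroot i ∧ ∑ i, c i = n

/-- A long root: a root of maximal squared length. -/
def IsLong (γ : V) : Prop := γ ∈ R.Δ ∧ ∀ b ∈ R.Δ, ⟪b, b⟫ ≤ ⟪γ, γ⟫

/-- The highest root. -/
def IsHighest (θ : V) : Prop := θ ∈ R.pos ∧ ∀ γ ∈ R.pos, R.le γ θ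

/-- Simply-laced: all roots have the same length. -/
def SimplyLaced : Prop := ∀ a ∈ R.Δ, ∀ b ∈ R.Δ, ⟪a, a⟫ = ⟪b, b⟫

/-- A minimal inversion complete set. -/
def IsMICS (F : Set (V ≃ₗ[ℝ] V)) : Prop :=
  (∀ w ∈ F, w ∈ R.W) ∧ (⋃ w ∈ F, R.N w) = R.pos ∧
    ∀ F' ⊂ F, (⋃ w ∈ F', R.N w) ≠ R.pos

end RSD

/-!
In a simply-laced root system the Cartan integer `⟨b, a∨⟩` of two non-proportional roots lies in
`{-1, 0, 1}`, so a simple reflection moves a positive root by at most one simple root. Hence a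
word of length `n` carrying `δ ∈ Δ⁺` to `α_i` satisfies `φ δ ≤ φ α_i + n` for every linear form
`φ` with `|φ α_k| ≤ 1`. For `φ = ht` and `φ = ht - 2 [·:α_i]` this gives `ℓ(w) ≥ ht γ - 1`, and
repeatedly subtracting a simple root `α_j`, `j ≠ i`, of positive pairing with `γ` gives a word
of exactly that length.

For a word `a ++ [k]` of length `ht γ - 1` the same bounds force `s_k γ = γ - α_k` with `k ≠ i`.
By induction `N(w_a) = S(γ - α_k)`, where `S(γ) = {μ ∈ Δ⁺ | [μ:α_i] = 0, γ - μ ∈ Δ⁺}`, and both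
`N(w_a s_k)` and `S(γ)` arise from these sets by applying `s_k` and adjoining `α_k`.
-/

namespace RSD

open Submodule

variable {ι V : Type*} [Fintype ι] [NormedAddCommGroup V] [InnerProductSpace ℝ V]
  (R : RSD ι V)

noncomputable def pairing (a b : V) : ℝ := 2 * ⟪a, b⟫ / ⟪a, a⟫

lemma reflect_apply_eq {a : V} (ha : a ∈ R.Δ) (v : V) :
    R.reflect a v = v - pairing a v • a :=
  R.reflect_apply a ha v

lemma inner_self_pos {a : V} (ha : a ∈ R.Δ) : 0 < ⟪a, a⟫ :=
  real_inner_self_pos.mpr fun h => R.zero_not_mem (h ▸ ha)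

lemma pairing_self {a : V} (ha : a ∈ R.Δ) : pairing a a = 2 := by
  have := (R.inner_self_pos ha).ne'
  unfold pairing
  field_simp

lemma reflect_self {a : V} (ha : a ∈ R.Δ) : R.reflect a a = -a := by
  rw [R.reflect_apply_eq ha, R.pairing_self ha, two_smul]
  abel

lemma reflect_reflect {a : V} (ha : a ∈ R.Δ) (v : V) : R.reflect a (R.reflect a v) = v := by
  rw [R.reflect_apply_eq ha v, map_sub, map_smul, R.reflect_self ha, R.reflect_apply_eq ha v,
    smul_neg, sub_neg_eq_add, sub_add_cancel]

lemma reflect_eq_sub_of_pairing_eq_one {a b : V} (ha : a ∈ R.Δ) (h : pairing a b = 1) :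
    R.reflect a b = b - a := by
  rw [R.reflect_apply_eq ha, h, one_smul]

def wordProd (l : List ι) : V ≃ₗ[ℝ] V := (l.map fun k => R.reflect (R.sroot k)).prod

@[simp] lemma wordProd_nil : R.wordProd [] = 1 := rfl

lemma wordProd_cons (k : ι) (l : List ι) :
    R.wordProd (k :: l) = R.reflect (R.sroot k) * R.wordProd l := by
  simp [wordProd]

lemma wordProd_concat (l : List ι) (k : ι) :
    R.wordProd (l ++ [k]) = R.wordProd l * R.reflect (R.sroot k) := by
  simp [wordProd]

lemma reflect_sroot_inv (k : ι) : (R.reflect (R.sroot k))⁻¹ = R.reflect (R.sroot k) :=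
  inv_eq_of_mul_eq_one_right (LinearEquiv.ext (R.reflect_reflect (R.sroot_mem k)))

lemma wordProd_reverse (l : List ι) : R.wordProd l.reverse = (R.wordProd l)⁻¹ := by
  induction l with
  | nil => simp
  | cons k l ih =>
    rw [List.reverse_cons, wordProd_concat, ih, wordProd_cons, mul_inv_rev, reflect_sroot_inv]

lemma wordProd_mem_W (l : List ι) : R.wordProd l ∈ R.W := by
  refine R.W.list_prod_mem fun x hx => ?_
  obtain ⟨k, -, rfl⟩ := List.mem_map.mp hx
  exact Subgroup.subset_closure ⟨k, rfl⟩

lemma exists_wordProd_eq_of_mem_W {w : V ≃ₗ[ℝ] V} (hw : w ∈ R.W) :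
    ∃ l : List ι, R.wordProd l = w := by
  induction hw using Subgroup.closure_induction with
  | mem x hx => obtain ⟨k, rfl⟩ := hx; exact ⟨[k], by simp [wordProd]⟩
  | one => exact ⟨[], rfl⟩
  | mul x y _ _ hx hy =>
    obtain ⟨l₁, rfl⟩ := hx
    obtain ⟨l₂, rfl⟩ := hy
    exact ⟨l₁ ++ l₂, by simp [wordProd]⟩
  | inv x _ hx =>
    obtain ⟨l, rfl⟩ := hx
    exact ⟨l.reverse, R.wordProd_reverse l⟩

lemma len_wordProd_le (l : List ι) : R.len (R.wordProd l) ≤ l.length :=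
  Nat.sInf_le ⟨l, rfl, rfl⟩

lemma exists_length_eq_len {w : V ≃ₗ[ℝ] V} (hw : w ∈ R.W) :
    ∃ l : List ι, l.length = R.len w ∧ R.wordProd l = w := by
  obtain ⟨l, hl⟩ := R.exists_wordProd_eq_of_mem_W hw
  exact Nat.sInf_mem (s := {n | ∃ l : List ι, l.length = n ∧ R.wordProd l = w})
    ⟨_, l, rfl, hl⟩

lemma wordProd_apply_mem (l : List ι) {x : V} (hx : x ∈ R.Δ) : R.wordProd l x ∈ R.Δ := by
  induction l with
  | nil => exact hx
  | cons k l ih =>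
    rw [wordProd_cons, LinearEquiv.mul_apply]
    exact R.reflect_root_mem _ (R.sroot_mem k) _ ih

instance : FiniteDimensional ℝ (span ℝ (Set.range R.sroot)) :=
  FiniteDimensional.span_of_finite ℝ (Set.finite_range _)

/-- The coefficient `[x:α_k]`. -/
noncomputable def coeff (k : ι) : V →ₗ[ℝ] ℝ :=
  Finsupp.lapply k ∘ₗ R.sroot_indep.repr ∘ₗ
    (span ℝ (Set.range R.sroot)).orthogonalProjectionOnto.toLinearMap

lemma coeff_sroot (j k : ι) : R.coeff j (R.sroot k) = Finsupp.single k 1 j := by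
  have hmem : R.sroot k ∈ span ℝ (Set.range R.sroot) := subset_span ⟨k, rfl⟩
  simp [coeff, orthogonalProjectionOnto_mem_subspace_eq_self ⟨_, hmem⟩,
    R.sroot_indep.repr_eq_single k ⟨_, hmem⟩ rfl]

lemma coeff_sroot_self (k : ι) : R.coeff k (R.sroot k) = 1 := by
  rw [coeff_sroot, Finsupp.single_eq_same]

lemma coeff_sroot_of_ne {j k : ι} (h : k ≠ j) : R.coeff j (R.sroot k) = 0 := by
  rw [coeff_sroot, Finsupp.single_eq_of_ne' h]

lemma coeff_sum_smul (c : ι → ℝ) (k : ι) : R.coeff k (∑ j, c j • R.sroot j) = c k := by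
  classical
  simp [coeff_sroot, Finsupp.single_apply]

lemma eq_sum_coeff_of_mem {x : V} (hx : x ∈ R.Δ) : x = ∑ k, R.coeff k x • R.sroot k := by
  obtain ⟨c, hc⟩ : ∃ c : ι → ℝ, x = ∑ k, c k • R.sroot k := by
    rcases R.decomp x hx with ⟨c, hc⟩ | ⟨c, hc⟩
    · exact ⟨_, hc⟩
    · exact ⟨fun k => -(c k : ℝ), by simp [hc, Finset.sum_neg_distrib]⟩
  simp_rw [hc, coeff_sum_smul]

lemma coeff_nonneg {x : V} (hx : x ∈ R.pos) (k : ι) : 0 ≤ R.coeff k x := by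
  obtain ⟨-, c, rfl⟩ := hx
  rw [coeff_sum_smul]
  positivity

lemma coeff_reflect_sroot_of_ne {j k : ι} (h : k ≠ j) (x : V) :
    R.coeff j (R.reflect (R.sroot k) x) = R.coeff j x := by
  rw [R.reflect_apply_eq (R.sroot_mem k), map_sub, map_smul, R.coeff_sroot_of_ne h, smul_zero,
    sub_zero]

noncomputable def height : V →ₗ[ℝ] ℝ := ∑ k, R.coeff k

lemma height_apply (x : V) : R.height x = ∑ k, R.coeff k x := by
  simp [height]

lemma height_sroot (k : ι) : R.height (R.sroot k) = 1 := by
  classical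
  simp [height_apply, coeff_sroot, Finsupp.single_apply]

lemma exists_height_eq_add_one {x : V} (hx : x ∈ R.pos) : ∃ n : ℕ, R.height x = n + 1 := by
  obtain ⟨hxΔ, c, rfl⟩ := hx
  have hne : ∑ k, c k ≠ 0 := fun h0 => by
    rw [Finset.sum_eq_zero_iff] at h0
    simp [h0, R.zero_not_mem] at hxΔ
  obtain ⟨n, hn⟩ := Nat.exists_eq_add_one_of_ne_zero hne
  refine ⟨n, ?_⟩
  simp_rw [height_apply, coeff_sum_smul]
  exact_mod_cast hn

lemma one_le_height {x : V} (hx : x ∈ R.pos) : 1 ≤ R.height x := by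
  obtain ⟨n, hn⟩ := R.exists_height_eq_add_one hx
  rw [hn]
  linarith [n.cast_nonneg (α := ℝ)]

lemma neg_notMem_pos {x : V} (hx : x ∈ R.pos) : -x ∉ R.pos := fun h => by
  have := R.one_le_height h
  rw [map_neg] at this
  linarith [R.one_le_height hx]

lemma mem_pos_or_neg_mem_pos {x : V} (hx : x ∈ R.Δ) : x ∈ R.pos ∨ -x ∈ R.pos := by
  rcases R.decomp x hx with ⟨c, hc⟩ | ⟨c, hc⟩
  · exact Or.inl ⟨hx, c, hc⟩
  · exact Or.inr ⟨R.neg_mem x hx, c, by rw [hc, neg_neg]⟩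

lemma mem_pos_of_coeff_pos {x : V} (hx : x ∈ R.Δ) {k : ι} (h : 0 < R.coeff k x) : x ∈ R.pos :=
  (R.mem_pos_or_neg_mem_pos hx).resolve_right fun hneg => by
    have := R.coeff_nonneg hneg k
    rw [map_neg] at this
    linarith

lemma sroot_mem_pos (k : ι) : R.sroot k ∈ R.pos :=
  R.mem_pos_of_coeff_pos (R.sroot_mem k) (k := k) (by rw [coeff_sroot_self]; exact one_pos)

variable {R}

lemma eq_one_or_eq_neg_one_of_smul_mem (hsl : R.SimplyLaced) {a : V} {c : ℝ} (ha : a ∈ R.Δ)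
    (h : c • a ∈ R.Δ) : c = 1 ∨ c = -1 := by
  have hlen := hsl _ h a ha
  rw [real_inner_smul_left, real_inner_smul_right, ← mul_assoc] at hlen
  exact mul_self_eq_one_iff.mp
    (mul_right_cancel₀ (R.inner_self_pos ha).ne' (hlen.trans (one_mul _).symm))

lemma pairing_eq_neg_one_or_zero_or_one (hsl : R.SimplyLaced) {a b : V} (ha : a ∈ R.Δ)
    (hb : b ∈ R.Δ) (hba : b ≠ a) (hba' : b ≠ -a) :
    pairing a b = -1 ∨ pairing a b = 0 ∨ pairing a b = 1 := by
  obtain ⟨n, hn⟩ := R.crys a ha b hb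
  have hL := R.inner_self_pos ha
  have hab : 2 * ⟪a, b⟫ = n * ⟪a, a⟫ := by rw [← hn]; field_simp
  have hbb : ⟪b, b⟫ = ⟪a, a⟫ := hsl b hb a ha
  -- `‖b ∓ a‖² = (2 ∓ n) ‖a‖²` is positive since `b ≠ ± a`
  have hsub : 0 < (2 - n) * ⟪a, a⟫ := by
    have := real_inner_self_pos.mpr (sub_ne_zero.mpr hba)
    rw [real_inner_sub_sub_self, real_inner_comm a b] at this
    linarith
  have hadd : 0 < (2 + n) * ⟪a, a⟫ := by
    have := real_inner_self_pos.mpr (mt add_eq_zero_iff_eq_neg.mp hba')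
    rw [real_inner_add_add_self, real_inner_comm a b] at this
    linarith
  have hn2 : -2 < (n : ℝ) ∧ (n : ℝ) < 2 := ⟨by nlinarith, by nlinarith⟩
  have : -2 < n ∧ n < 2 := by exact_mod_cast hn2
  rw [pairing, hn]
  rcases (by omega : n = -1 ∨ n = 0 ∨ n = 1) with rfl | rfl | rfl <;> norm_num

lemma sub_sub_notMem (hsl : R.SimplyLaced) {a b : V} (ha : a ∈ R.Δ) (hb : b ∈ R.Δ)
    (h : pairing a b = 1) : b - a - a ∉ R.Δ := fun hmem => by
  have hL := R.inner_self_pos ha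
  have hab : 2 * ⟪a, b⟫ = ⟪a, a⟫ := (div_eq_one_iff_eq hL.ne').mp h
  have hlen := hsl _ hmem a ha
  simp only [inner_sub_left, inner_sub_right, real_inner_comm a b, hsl b hb a ha] at hlen
  linarith

lemma reflect_sroot_mem_pos (hsl : R.SimplyLaced) {k : ι} {μ : V} (hμ : μ ∈ R.pos)
    (hne : μ ≠ R.sroot k) : R.reflect (R.sroot k) μ ∈ R.pos := by
  by_cases h : ∃ j, k ≠ j ∧ 0 < R.coeff j μ
  · obtain ⟨j, hkj, hj⟩ := h
    refine R.mem_pos_of_coeff_pos (R.reflect_root_mem _ (R.sroot_mem k) μ hμ.1) (k := j) ?_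
    rwa [R.coeff_reflect_sroot_of_ne hkj]
  · push Not at h
    have hμk : μ = R.coeff k μ • R.sroot k := by
      conv_lhs => rw [R.eq_sum_coeff_of_mem hμ.1]
      refine Finset.sum_eq_single k (fun j _ hj => ?_) (by simp)
      rw [le_antisymm (h j (Ne.symm hj)) (R.coeff_nonneg hμ j), zero_smul]
    rcases eq_one_or_eq_neg_one_of_smul_mem hsl (R.sroot_mem k) (hμk ▸ hμ.1) with hc | hc
    · exact absurd (by rw [hμk, hc, one_smul]) hne
    · linarith [R.coeff_nonneg hμ k]

lemma pairing_sroot_eq_neg_one_or_zero_or_one (hsl : R.SimplyLaced) {k : ι} {δ : V}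
    (hδ : δ ∈ R.pos) (hne : δ ≠ R.sroot k) :
    pairing (R.sroot k) δ = -1 ∨ pairing (R.sroot k) δ = 0 ∨ pairing (R.sroot k) δ = 1 :=
  pairing_eq_neg_one_or_zero_or_one hsl (R.sroot_mem k) hδ.1 hne
    fun h => R.neg_notMem_pos (R.sroot_mem_pos k) (h ▸ hδ)

lemma sub_sroot_mem_pos (hsl : R.SimplyLaced) {k : ι} {γ : V} (hγ : γ ∈ R.pos)
    (h : pairing (R.sroot k) γ = 1) : γ - R.sroot k ∈ R.pos := by
  have hγk : γ ≠ R.sroot k := by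
    rintro rfl
    rw [R.pairing_self (R.sroot_mem k)] at h
    norm_num at h
  rw [← R.reflect_eq_sub_of_pairing_eq_one (R.sroot_mem k) h]
  exact reflect_sroot_mem_pos hsl hγ hγk

lemma apply_le_apply_sroot_add_length (hsl : R.SimplyLaced) {i : ι} (φ : V →ₗ[ℝ] ℝ)
    (hφ : ∀ k, |φ (R.sroot k)| ≤ 1) (l : List ι) :
    ∀ δ ∈ R.pos, R.wordProd l δ = R.sroot i → φ δ ≤ φ (R.sroot i) + l.length := by
  induction l using List.reverseRecOn with
  | nil =>
    rintro δ - rfl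
    simp
  | append_singleton a k ih =>
    intro δ hδ h
    rw [wordProd_concat, LinearEquiv.mul_apply] at h
    have hφk := abs_le.mp (hφ k)
    have hφi := abs_le.mp (hφ i)
    rw [List.length_append, List.length_singleton, Nat.cast_add, Nat.cast_one]
    by_cases hδk : δ = R.sroot k
    · have ha : a ≠ [] := by
        rintro rfl
        rw [hδk, R.reflect_self (R.sroot_mem k), wordProd_nil, LinearEquiv.coe_one, id_eq] at h
        exact R.neg_notMem_pos (R.sroot_mem_pos k) (h ▸ R.sroot_mem_pos i)
      have : (1 : ℝ) ≤ a.length := by exact_mod_cast List.length_pos_iff.mpr ha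
      rw [hδk]
      linarith
    · have hbound := ih _ (reflect_sroot_mem_pos hsl hδ hδk) h
      rw [R.reflect_apply_eq (R.sroot_mem k), map_sub, map_smul, smul_eq_mul] at hbound
      rcases pairing_sroot_eq_neg_one_or_zero_or_one hsl hδ hδk with hc | hc | hc <;>
        rw [hc] at hbound <;> linarith

lemma height_le_length_add_one (hsl : R.SimplyLaced) {i : ι} (l : List ι) {δ : V}
    (hδ : δ ∈ R.pos) (h : R.wordProd l δ = R.sroot i) : R.height δ ≤ l.length + 1 := by
  have := apply_le_apply_sroot_add_length hsl R.height (by simp [height_sroot]) l δ hδ h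
  rw [height_sroot] at this
  linarith

lemma height_sub_two_mul_coeff_add_one_le_length (hsl : R.SimplyLaced) {i : ι} (l : List ι)
    {δ : V} (hδ : δ ∈ R.pos) (h : R.wordProd l δ = R.sroot i) :
    R.height δ - 2 * R.coeff i δ + 1 ≤ l.length := by
  have hφ : ∀ k, |(R.height - (2 : ℝ) • R.coeff i) (R.sroot k)| ≤ 1 := fun k => by
    by_cases hki : k = i
    · subst hki
      norm_num [height_sroot, coeff_sroot_self]
    · simp [height_sroot, R.coeff_sroot_of_ne hki]
  have := apply_le_apply_sroot_add_length hsl _ hφ l δ hδ h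
  simp only [LinearMap.sub_apply, LinearMap.smul_apply, height_sroot, coeff_sroot_self,
    smul_eq_mul] at this
  linarith

lemma exists_pairing_sroot_eq_one (hsl : R.SimplyLaced) {i : ι} {γ : V} (hγ : γ ∈ R.pos)
    (hcf : R.coeff i γ = 1) (hne : γ ≠ R.sroot i) :
    ∃ j, j ≠ i ∧ pairing (R.sroot j) γ = 1 := by
  classical
  by_contra! h
  -- all simple roots have the length of `γ`, so `∑ [γ:α_j] ⟨γ, α_j∨⟩ = ⟨γ, γ∨⟩ = 2`
  have hsum : ∑ j, R.coeff j γ * pairing (R.sroot j) γ = 2 := by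
    simp_rw [pairing, hsl _ (R.sroot_mem _) γ hγ.1]
    calc ∑ j, R.coeff j γ * (2 * ⟪R.sroot j, γ⟫ / ⟪γ, γ⟫)
        = 2 * ⟪∑ j, R.coeff j γ • R.sroot j, γ⟫ / ⟪γ, γ⟫ := by
          simp_rw [sum_inner, real_inner_smul_left, Finset.mul_sum, Finset.sum_div]
          exact Finset.sum_congr rfl fun _ _ => by ring
      _ = 2 := by
          have := (R.inner_self_pos hγ.1).ne'
          rw [← R.eq_sum_coeff_of_mem hγ.1]
          field_simp
  have hterm : ∀ j ∈ Finset.univ.erase i, R.coeff j γ * pairing (R.sroot j) γ ≤ 0 := by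
    intro j hj
    have hji := (Finset.mem_erase.mp hj).1
    have hγj : γ ≠ R.sroot j := fun hγj => by
      rw [hγj, R.coeff_sroot_of_ne hji] at hcf
      exact zero_ne_one hcf
    refine mul_nonpos_of_nonneg_of_nonpos (R.coeff_nonneg hγ j) ?_
    rcases pairing_sroot_eq_neg_one_or_zero_or_one hsl hγ hγj with hc | hc | hc
    · linarith
    · linarith
    · exact absurd hc (h j hji)
  have hi : pairing (R.sroot i) γ ≤ 1 := by
    rcases pairing_sroot_eq_neg_one_or_zero_or_one hsl hγ hne with hc | hc | hc <;> linarith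
  rw [← Finset.add_sum_erase _ _ (Finset.mem_univ i), hcf, one_mul] at hsum
  linarith [Finset.sum_nonpos hterm]

lemma exists_wordProd_apply_eq_sroot (hsl : R.SimplyLaced) {i : ι} (n : ℕ) :
    ∀ γ ∈ R.pos, R.coeff i γ = 1 → R.height γ = n + 1 →
      ∃ l : List ι, l.length = n ∧ R.wordProd l γ = R.sroot i := by
  induction n with
  | zero =>
    intro γ hγ hcf hht
    refine ⟨[], rfl, ?_⟩
    by_contra hne
    obtain ⟨j, -, hj⟩ := exists_pairing_sroot_eq_one hsl hγ hcf hne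
    have := R.one_le_height (sub_sroot_mem_pos hsl hγ hj)
    rw [map_sub, height_sroot, hht] at this
    norm_num at this
  | succ n ih =>
    intro γ hγ hcf hht
    have hne : γ ≠ R.sroot i := by
      rintro rfl
      rw [height_sroot] at hht
      push_cast at hht
      linarith [n.cast_nonneg (α := ℝ)]
    obtain ⟨j, hji, hj⟩ := exists_pairing_sroot_eq_one hsl hγ hcf hne
    obtain ⟨l, hl, hlγ⟩ := ih (γ - R.sroot j) (sub_sroot_mem_pos hsl hγ hj)
      (by rw [map_sub, R.coeff_sroot_of_ne hji, hcf, sub_zero])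
      (by rw [map_sub, height_sroot, hht]; push_cast; ring)
    refine ⟨l ++ [j], by simp [hl], ?_⟩
    rw [wordProd_concat, LinearEquiv.mul_apply,
      R.reflect_eq_sub_of_pairing_eq_one (R.sroot_mem j) hj, hlγ]

variable (R) in
def summandsAvoiding (i : ι) (γ : V) : Set V :=
  {μ ∈ R.pos | R.coeff i μ = 0 ∧ γ - μ ∈ R.pos}

lemma N_mul_reflect (hsl : R.SimplyLaced) {u : V ≃ₗ[ℝ] V} {k : ι}
    (hu : u (R.sroot k) ∈ R.pos) :
    R.N (u * R.reflect (R.sroot k)) =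
      insert (R.sroot k) (R.reflect (R.sroot k) '' R.N u) := by
  have hk := R.sroot_mem k
  ext μ
  simp only [N, Set.mem_insert_iff, Set.mem_image, Set.mem_ofPred_eq,
    LinearEquiv.mul_apply]
  constructor
  · rintro ⟨hμ, hμneg⟩
    by_cases hμk : μ = R.sroot k
    · exact Or.inl hμk
    · exact Or.inr ⟨_, ⟨reflect_sroot_mem_pos hsl hμ hμk, hμneg⟩, R.reflect_reflect hk μ⟩
  · rintro (rfl | ⟨ν, ⟨hν, hνneg⟩, rfl⟩)
    · exact ⟨R.sroot_mem_pos k, by rwa [R.reflect_self hk, map_neg, neg_neg]⟩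
    · have hνk : ν ≠ R.sroot k := by
        rintro rfl
        exact R.neg_notMem_pos hu hνneg
      exact ⟨reflect_sroot_mem_pos hsl hν hνk, by rwa [R.reflect_reflect hk]⟩

lemma summandsAvoiding_eq_insert (hsl : R.SimplyLaced) {i k : ι} (hki : k ≠ i) {γ : V}
    (hγ : γ ∈ R.pos) (hcf : R.coeff i γ = 1) (hc : pairing (R.sroot k) γ = 1) :
    R.summandsAvoiding i γ =
      insert (R.sroot k) (R.reflect (R.sroot k) '' R.summandsAvoiding i (γ - R.sroot k)) := by
  have hk := R.sroot_mem k
  have hγk := R.reflect_eq_sub_of_pairing_eq_one hk hc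
  have hne : ∀ x, R.coeff i x = 1 → x ≠ R.sroot k := fun x hx hxk => by
    rw [hxk, R.coeff_sroot_of_ne hki] at hx
    exact zero_ne_one hx
  ext μ
  simp only [summandsAvoiding, Set.mem_insert_iff, Set.mem_image, Set.mem_ofPred_eq]
  constructor
  · rintro ⟨hμ, hμi, hγμ⟩
    by_cases hμk : μ = R.sroot k
    · exact Or.inl hμk
    · refine Or.inr ⟨_, ⟨reflect_sroot_mem_pos hsl hμ hμk,
        by rwa [R.coeff_reflect_sroot_of_ne hki], ?_⟩, R.reflect_reflect hk μ⟩
      rw [← hγk, ← map_sub]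
      exact reflect_sroot_mem_pos hsl hγμ (hne _ (by rw [map_sub, hcf, hμi, sub_zero]))
  · rintro (rfl | ⟨ν, ⟨hν, hνi, hγν⟩, rfl⟩)
    · exact ⟨R.sroot_mem_pos k, R.coeff_sroot_of_ne hki, sub_sroot_mem_pos hsl hγ hc⟩
    · have hνk : ν ≠ R.sroot k := by
        rintro rfl
        exact sub_sub_notMem hsl hk hγ.1 hc hγν.1
      refine ⟨reflect_sroot_mem_pos hsl hν hνk, by rwa [R.coeff_reflect_sroot_of_ne hki], ?_⟩
      have hfix : γ - R.reflect (R.sroot k) ν = R.reflect (R.sroot k) (γ - R.sroot k - ν) := by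
        rw [map_sub, ← hγk, R.reflect_reflect hk]
      rw [hfix]
      refine reflect_sroot_mem_pos hsl hγν (hne _ ?_)
      rw [map_sub, map_sub, hcf, hνi, R.coeff_sroot_of_ne hki]
      norm_num

lemma pairing_sroot_eq_one_of_wordProd_reflect_eq (hsl : R.SimplyLaced) {i k : ι} {a : List ι}
    {γ : V} (hγ : γ ∈ R.pos) (h : R.wordProd a (R.reflect (R.sroot k) γ) = R.sroot i)
    (hlen : (a.length : ℝ) + 2 = R.height γ) : pairing (R.sroot k) γ = 1 := by
  have hγk : γ ≠ R.sroot k := by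
    rintro rfl
    rw [height_sroot] at hlen
    linarith [a.length.cast_nonneg (α := ℝ)]
  have hbound := height_le_length_add_one hsl a (reflect_sroot_mem_pos hsl hγ hγk) h
  rw [R.reflect_apply_eq (R.sroot_mem k), map_sub, map_smul, height_sroot, smul_eq_mul,
    mul_one] at hbound
  rcases pairing_sroot_eq_neg_one_or_zero_or_one hsl hγ hγk with hc | hc | hc <;>
    rw [hc] at hbound ⊢ <;> linarith

lemma N_wordProd_eq_summandsAvoiding (hsl : R.SimplyLaced) {i : ι} (l : List ι) :
    ∀ γ ∈ R.pos, R.coeff i γ = 1 → R.wordProd l γ = R.sroot i →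
      (l.length : ℝ) + 1 = R.height γ → R.N (R.wordProd l) = R.summandsAvoiding i γ := by
  induction l using List.reverseRecOn with
  | nil =>
    rintro γ - - - hht
    rw [List.length_nil, Nat.cast_zero, zero_add] at hht
    ext μ
    simp only [N, summandsAvoiding, wordProd_nil, LinearEquiv.coe_one, id_eq, Set.mem_ofPred_eq]
    refine iff_of_false (fun h => R.neg_notMem_pos h.1 h.2) fun ⟨hμ, _, hγμ⟩ => ?_
    have := R.one_le_height hγμ
    rw [map_sub, ← hht] at this
    linarith [R.one_le_height hμ]
  | append_singleton a k ih =>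
    intro γ hγ hcf h hlen
    rw [wordProd_concat, LinearEquiv.mul_apply] at h
    rw [List.length_append, List.length_singleton, Nat.cast_add, Nat.cast_one] at hlen
    have hc := pairing_sroot_eq_one_of_wordProd_reflect_eq hsl hγ h (by linarith)
    have hγ' := sub_sroot_mem_pos hsl hγ hc
    rw [R.reflect_eq_sub_of_pairing_eq_one (R.sroot_mem k) hc] at h
    have hki : k ≠ i := by
      rintro rfl
      have hbound := height_sub_two_mul_coeff_add_one_le_length hsl a hγ' h
      rw [map_sub, map_sub, height_sroot, coeff_sroot_self, hcf] at hbound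
      linarith
    have hN := ih _ hγ' (by rw [map_sub, R.coeff_sroot_of_ne hki, hcf, sub_zero]) h
      (by rw [map_sub, height_sroot]; linarith)
    -- `α_k ∉ N(w_a)`, since otherwise `γ - α_k - α_k` would be a root
    have hu : R.wordProd a (R.sroot k) ∈ R.pos := by
      refine (R.mem_pos_or_neg_mem_pos (R.wordProd_apply_mem a (R.sroot_mem k))).resolve_right
        fun hneg => ?_
      have hmem : R.sroot k ∈ R.summandsAvoiding i (γ - R.sroot k) :=
        hN ▸ ⟨R.sroot_mem_pos k, hneg⟩
      exact sub_sub_notMem hsl (R.sroot_mem k) hγ.1 hc hmem.2.2.1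
    rw [wordProd_concat, N_mul_reflect hsl hu, hN, summandsAvoiding_eq_insert hsl hki hγ hcf hc]

lemma coeff_eq_iff {x : V} (hx : x ∈ R.pos) (i : ι) (n : ℕ) :
    R.coeff i x = n ↔ ∀ c : ι → ℕ, x = ∑ k, (c k : ℝ) • R.sroot k → c i = n := by
  obtain ⟨c₀, hc₀⟩ := hx.2
  constructor
  · rintro h c rfl
    rw [coeff_sum_smul] at h
    exact_mod_cast h
  · intro h
    rw [hc₀, coeff_sum_smul, h c₀ hc₀]

end RSD

theorem inversion_set_for_alpha_height_one_general
    {ι V : Type*} [Fintype ι] [NormedAddCommGroup V] [InnerProductSpace ℝ V]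
    (R : RSD ι V) (hsl : R.SimplyLaced) (i : ι) (γ : V) (hγ : γ ∈ R.pos)
    (hcoef : ∀ c : ι → ℕ, γ = ∑ k, (c k : ℝ) • R.sroot k → c i = 1)
    (w : V ≃ₗ[ℝ] V) (hw : w ∈ R.W) (hwγ : w γ = R.sroot i)
    (hmin : ∀ w' ∈ R.W, w' γ = R.sroot i → R.len w ≤ R.len w') :
    R.N w = {μ ∈ R.pos |
      (∀ c : ι → ℕ, μ = ∑ k, (c k : ℝ) • R.sroot k → c i = 0) ∧ γ - μ ∈ R.pos} := by
  have hcf : R.coeff i γ = 1 := by exact_mod_cast (RSD.coeff_eq_iff hγ i 1).mpr hcoef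
  obtain ⟨n, hn⟩ := R.exists_height_eq_add_one hγ
  obtain ⟨l₀, hl₀, hl₀γ⟩ := RSD.exists_wordProd_apply_eq_sroot hsl n γ hγ hcf hn
  obtain ⟨l, hl, rfl⟩ := R.exists_length_eq_len hw
  have hle : l.length ≤ n :=
    hl ▸ hl₀ ▸ (hmin _ (R.wordProd_mem_W l₀) hl₀γ).trans (R.len_wordProd_le l₀)
  have hge := RSD.height_sub_two_mul_coeff_add_one_le_length hsl l hγ hwγ
  have hlen : (l.length : ℝ) + 1 = R.height γ := by
    rw [hcf, hn] at hge
    rw [hn]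
    linarith [(Nat.cast_le (α := ℝ)).mpr hle]
  rw [RSD.N_wordProd_eq_summandsAvoiding hsl l γ hγ hcf hwγ hlen]
  ext μ
  exact and_congr_right fun hμ => and_congr_left' (by exact_mod_cast RSD.coeff_eq_iff hμ i 0)

/-- In the simply-laced case, if `γ ≽ α` with `[γ:α] = 1` (`α` simple),
then `N(w_{γ,α}) = {μ ∈ Δ⁺ ∣ [μ:α] = 0 ∧ γ - μ ∈ Δ⁺}`. -/
theorem inversion_set_for_alpha_height_one
    {ι V : Type*} [Fintype ι] [NormedAddCommGroup V] [InnerProductSpace ℝ V]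
    (R : RSD ι V) (hsl : R.SimplyLaced) (i : ι) (γ : V) (hγ : γ ∈ R.pos)
    (hle : R.le (R.sroot i) γ)
    (hcoef : ∀ c : ι → ℕ, γ = ∑ k, (c k : ℝ) • R.sroot k → c i = 1)
    (w : V ≃ₗ[ℝ] V) (hw : w ∈ R.W) (hwγ : w γ = R.sroot i)
    (hmin : ∀ w' ∈ R.W, w' γ = R.sroot i → R.len w ≤ R.len w') :
    R.N w = {μ ∈ R.pos |
      (∀ c : ι → ℕ, μ = ∑ k, (c k : ℝ) • R.sroot k → c i = 0) ∧ γ - μ ∈ R.pos} :=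
  inversion_set_for_alpha_height_one_general R hsl i γ hγ hcoef w hw hwγ hmin
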